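/- Let (A, m) be a Noetherian local ring, let M be a finitely generated A-module, and let I ⊆ J be ideals of A. Assume: (a) there exists n ≥ 1 such that I • (Jⁿ • M) = J^{n+1} • M; and (b) there exist i₀ and j₀ such that mⁱ • (J • (Iʲ • M)) ⊆ I^{j+1} • M for all i ≥ i₀ and all j ≥ j₀. Then there exist positive integers k and l such that mᵏ • (Jʲ • M) ⊆ Iʲ • M for all j ≥ l; in particular, λ(JʲM/IʲM) is finite for all j ≥ l. (Core deduction in the proof of Proposition 4.1.) -/

import Mathlib

/-!
Iterating the reduction equation gives `Jⁿ⁺ᵐM = IᵐJⁿM = JⁿIᵐM`, while iterating (b) with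
`i = i₀ + 1` gives `(𝔪ⁱ)ˢJˢIᵐM ⊆ Iᵐ⁺ˢM` for `m ≥ j₀`; taking `s = n` yields `𝔪ⁱⁿJʲM ⊆ IʲM`
for `j ≥ n + j₀`.
A finitely generated module killed by a power of `𝔪` is a finitely generated module over the
Artinian ring `A ⧸ 𝔪ᵏ`, hence of finite length.
-/

/-- The length of a module, i.e. the Krull dimension of its submodule lattice,
as an element of `ℕ∞`. -/
noncomputable def moduleLength (A M : Type*) [CommRing A] [AddCommGroup M] [Module A M] : ℕ∞ :=
  WithBot.unbotD 0 (Order.krullDim (Submodule A M))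

/-- `lenQuot L K` is the length `λ(K/L)` of the subquotient `K/L` of `M`,
realized as the image of `K` in `M ⧸ L`. -/
noncomputable def lenQuot {A M : Type*} [CommRing A] [AddCommGroup M] [Module A M]
    (L K : Submodule A M) : ℕ∞ :=
  moduleLength A ↥(K.map L.mkQ)

open IsLocalRing

namespace Submodule

variable {R M : Type*} [CommSemiring R] [AddCommMonoid M] [Module R M]

theorem ideal_smul_comm (I J : Ideal R) (N : Submodule R M) : I • J • N = J • I • N := by
  rw [← Submodule.mul_smul, mul_comm, Submodule.mul_smul]

theorem pow_smul_pow_smul_eq_of_reduction {I J : Ideal R} {N : Submodule R M} {n : ℕ}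
    (hred : I • J ^ n • N = J ^ (n + 1) • N) (m : ℕ) :
    I ^ m • J ^ n • N = J ^ (n + m) • N := by
  induction m with
  | zero => simp
  | succ m ih =>
    calc I ^ (m + 1) • J ^ n • N = I • J ^ m • J ^ n • N := by
          rw [pow_succ', Submodule.mul_smul, ih, add_comm, pow_add, Submodule.mul_smul]
      _ = J ^ (n + (m + 1)) • N := by
          rw [ideal_smul_comm, hred, ← Submodule.mul_smul, ← pow_add, add_left_comm]

theorem pow_smul_pow_smul_pow_smul_le {K I J : Ideal R} {N : Submodule R M} {j₀ : ℕ}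
    (h : ∀ j ≥ j₀, K • J • I ^ j • N ≤ I ^ (j + 1) • N) (s : ℕ) :
    ∀ j ≥ j₀, K ^ s • J ^ s • I ^ j • N ≤ I ^ (j + s) • N := by
  induction s with
  | zero => simp
  | succ s ih =>
    intro j hj
    calc K ^ (s + 1) • J ^ (s + 1) • I ^ j • N = K ^ s • J ^ s • K • J • I ^ j • N := by
          simp only [← Submodule.mul_smul]
          congr 1
          ring
      _ ≤ K ^ s • J ^ s • I ^ (j + 1) • N := smul_mono_right _ (smul_mono_right _ (h j hj))
      _ ≤ I ^ (j + (s + 1)) • N := by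
          rw [← add_assoc, add_right_comm]
          exact ih (j + 1) (by omega)

theorem pow_smul_pow_smul_le_of_reduction {K I J : Ideal R} {N : Submodule R M} {n j₀ : ℕ}
    (hred : I • J ^ n • N = J ^ (n + 1) • N)
    (h : ∀ j ≥ j₀, K • J • I ^ j • N ≤ I ^ (j + 1) • N) :
    ∀ j ≥ n + j₀, K ^ n • J ^ j • N ≤ I ^ j • N := by
  intro j hj
  obtain ⟨m, rfl⟩ := Nat.exists_eq_add_of_le (le_of_add_le_left hj)
  rw [← pow_smul_pow_smul_eq_of_reduction hred, ideal_smul_comm (I ^ m), add_comm n]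
  exact pow_smul_pow_smul_pow_smul_le h n m (by omega)

theorem isTorsionBySet_map_mkQ_of_smul_le {R M : Type*} [CommRing R] [AddCommGroup M]
    [Module R M] {a : Ideal R} {P Q : Submodule R M} (h : a • Q ≤ P) :
    Module.IsTorsionBySet R (Q.map P.mkQ) a := by
  rintro ⟨_, y, hy, rfl⟩ ⟨r, hr⟩
  refine Subtype.ext ?_
  change r • P.mkQ y = 0
  rw [← map_smul, mkQ_apply, Quotient.mk_eq_zero]
  exact h (smul_mem_smul hr hy)

end Submodule

namespace IsLocalRing

variable {A : Type*} [CommRing A] [IsLocalRing A] [IsNoetherianRing A]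

instance isArtinianRing_quotient_maximalIdeal_pow (k : ℕ) :
    IsArtinianRing (A ⧸ maximalIdeal A ^ k) := by
  have : Ring.KrullDimLE 0 (A ⧸ maximalIdeal A ^ k) := Ring.krullDimLE_zero_iff.mpr fun P hP ↦
    Ideal.isMaximal_of_isIntegral_of_isMaximal_comap _ <| by
      convert maximalIdeal.isMaximal A
      have hk : maximalIdeal A ^ k ≤ P.comap (algebraMap A _) := by
        simpa [Ideal.Quotient.algebraMap_eq, Ideal.mk_ker] using
          Ideal.ker_le_comap (Ideal.Quotient.mk (maximalIdeal A ^ k)) (K := P)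
      exact le_antisymm (le_maximalIdeal (hP.comap _).ne_top) ((hP.comap _).le_of_pow_le hk)
  exact IsNoetherianRing.isArtinianRing_of_krullDimLE_zero

theorem isFiniteLength_of_isTorsionBySet_maximalIdeal_pow {N : Type*} [AddCommGroup N]
    [Module A N] [Module.Finite A N] {k : ℕ}
    (h : Module.IsTorsionBySet A N (maximalIdeal A ^ k : Ideal A)) : IsFiniteLength A N := by
  let := h.module
  have : IsScalarTower A (A ⧸ maximalIdeal A ^ k) N := h.isScalarTower
  have : Module.Finite (A ⧸ maximalIdeal A ^ k) N :=
    Module.Finite.of_restrictScalars_finite A _ N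
  have : IsArtinian A N := isArtinian_of_surjective_algebraMap
    (Ideal.Quotient.mk_surjective (I := maximalIdeal A ^ k))
  exact isFiniteLength_iff_isNoetherian_isArtinian.mpr ⟨inferInstance, this⟩

end IsLocalRing

theorem moduleLength_eq_length (A M : Type*) [CommRing A] [AddCommGroup M] [Module A M] :
    moduleLength A M = Module.length A M := by
  rw [moduleLength, ← Module.coe_length, WithBot.unbotD_coe]

theorem lenQuot_lt_top_of_maximalIdeal_pow_smul_le {A M : Type*} [CommRing A] [IsLocalRing A]
    [IsNoetherianRing A] [AddCommGroup M] [Module A M] [Module.Finite A M]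
    {P Q : Submodule A M} {k : ℕ} (h : maximalIdeal A ^ k • Q ≤ P) : lenQuot P Q < ⊤ := by
  rw [lenQuot, moduleLength_eq_length, lt_top_iff_ne_top, Module.length_ne_top_iff]
  exact isFiniteLength_of_isTorsionBySet_maximalIdeal_pow
    (Submodule.isTorsionBySet_map_mkQ_of_smul_le h)

theorem stmt_3_general {A M : Type*} [CommRing A] [IsLocalRing A] [IsNoetherianRing A]
    [AddCommGroup M] [Module A M] [Module.Finite A M]
    (I J : Ideal A)
    (ha : ∃ n ≥ 1, I • (J ^ n • (⊤ : Submodule A M)) = J ^ (n + 1) • (⊤ : Submodule A M))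
    (hb : ∃ i₀ j₀ : ℕ, ∀ i ≥ i₀, ∀ j ≥ j₀,
      (IsLocalRing.maximalIdeal A) ^ i • (J • (I ^ j • (⊤ : Submodule A M)))
        ≤ I ^ (j + 1) • (⊤ : Submodule A M)) :
    ∃ k l : ℕ, 0 < k ∧ 0 < l ∧ ∀ j ≥ l,
      (IsLocalRing.maximalIdeal A) ^ k • (J ^ j • (⊤ : Submodule A M))
          ≤ I ^ j • (⊤ : Submodule A M) ∧
        lenQuot (I ^ j • (⊤ : Submodule A M)) (J ^ j • (⊤ : Submodule A M)) < ⊤ := by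
  obtain ⟨n, hn, hred⟩ := ha
  obtain ⟨i₀, j₀, hb⟩ := hb
  refine ⟨(i₀ + 1) * n, n + j₀, Nat.mul_pos i₀.succ_pos hn, by omega, fun j hj => ?_⟩
  have hle : maximalIdeal A ^ ((i₀ + 1) * n) • J ^ j • (⊤ : Submodule A M) ≤ I ^ j • ⊤ := by
    rw [pow_mul]
    exact Submodule.pow_smul_pow_smul_le_of_reduction hred
      (fun j hj => hb (i₀ + 1) i₀.le_succ j hj) j hj
  exact ⟨hle, lenQuot_lt_top_of_maximalIdeal_pow_smul_le hle⟩

/-- Core deduction in the proof of Proposition 4.1: if `I` is a reduction of `(J, M)`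
and `𝔪ⁱ J IʲM ⊆ I^{j+1}M` for all `i ≥ i₀`, `j ≥ j₀`, then there are positive
integers `k, l` with `𝔪ᵏ JʲM ⊆ IʲM` for all `j ≥ l`; in particular `λ(JʲM/IʲM)`
is finite for `j ≥ l`. -/
theorem stmt_3 {A M : Type*} [CommRing A] [IsLocalRing A] [IsNoetherianRing A]
    [AddCommGroup M] [Module A M] [Module.Finite A M]
    (I J : Ideal A) (hIJ : I ≤ J)
    (ha : ∃ n ≥ 1, I • (J ^ n • (⊤ : Submodule A M)) = J ^ (n + 1) • (⊤ : Submodule A M))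
    (hb : ∃ i₀ j₀ : ℕ, ∀ i ≥ i₀, ∀ j ≥ j₀,
      (IsLocalRing.maximalIdeal A) ^ i • (J • (I ^ j • (⊤ : Submodule A M)))
        ≤ I ^ (j + 1) • (⊤ : Submodule A M)) :
    ∃ k l : ℕ, 0 < k ∧ 0 < l ∧ ∀ j ≥ l,
      (IsLocalRing.maximalIdeal A) ^ k • (J ^ j • (⊤ : Submodule A M))
          ≤ I ^ j • (⊤ : Submodule A M) ∧
        lenQuot (I ^ j • (⊤ : Submodule A M)) (J ^ j • (⊤ : Submodule A M)) < ⊤ :=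
  stmt_3_general I J ha hb
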